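/- (Lemma 8, curvature bound for g_P^{σ'} on the restricted simplex.) Let P = (P_1, …, P_K) be full-support distributions on 𝒳 with p_min = min_{i∈[K]} min_{a∈𝒳} P_i(a) > 0. Fix a hypothesis σ' with clusters A_1^{σ'}, …, A_{M_{σ'}}^{σ'}, γ ∈ (0, 1/K), and define ∇ : Σ_K^γ → ℝ^K by (∇(w))_i = D(P_i‖W_m(w)) if i ∈ A_m^{σ'} for some m, where W_m(w) = (Σ_{j∈A_m^{σ'}} w_j P_j)/(Σ_{j∈A_m^{σ'}} w_j), and (∇(w))_i = 0 otherwise. Then for all x, z ∈ Σ_K^γ, all α ∈ (0, 1], and y = x + α(z − x): g_P^{σ'}(x) − g_P^{σ'}(y) + ⟨y − x, ∇(x)⟩ ≤ (D_{σ'}/γ)·α², where D_{σ'} = (max_{m∈[M_{σ'}]} |A_m^{σ'}|) · |𝒳| · (1 − p_min)/(4 p_min) and ⟨·,·⟩ is the standard inner product on ℝ^K. -/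

import Mathlib

open Finset
open scoped Classical

/-- KL divergence between two distributions on a finite alphabet (convention `0 * log 0 = 0`). -/
noncomputable def klDiv {X : Type*} [Fintype X] (P Q : X → ℝ) : ℝ :=
  ∑ a, P a * Real.log (P a / Q a)

/-- The statistic `G((P_i)_{i ∈ A}, (w_i)_{i ∈ A})` for a finite index set `A`. -/
noncomputable def GstatF {X ι : Type*} [Fintype X] (A : Finset ι)
    (P : ι → X → ℝ) (w : ι → ℝ) : ℝ :=
  if ∀ i ∈ A, w i = 0 then 0
  else ∑ i ∈ A, w i * klDiv (P i) (fun a => (∑ j ∈ A, w j * P j a) / (∑ j ∈ A, w j))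

/-- `P` is a probability distribution on the finite alphabet `X`. -/
def IsDist {X : Type*} [Fintype X] (P : X → ℝ) : Prop :=
  (∀ a, 0 ≤ P a) ∧ ∑ a, P a = 1

/-- A hypothesis on `K` arms: a finite collection of pairwise disjoint clusters,
each of size at least 2. -/
def IsHyp {K : ℕ} (σ : Finset (Finset (Fin K))) : Prop :=
  (∀ C ∈ σ, 2 ≤ C.card) ∧
  ((σ : Set (Finset (Fin K))).Pairwise fun C D => Disjoint C D)

/-- The score `g_P^σ(w)` of a hypothesis `σ`. -/
noncomputable def gscore {X : Type*} [Fintype X] {K : ℕ}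
    (P : Fin K → X → ℝ) (σ : Finset (Finset (Fin K))) (w : Fin K → ℝ) : ℝ :=
  ∑ C ∈ σ, GstatF C P w

section Aux
variable {X : Type*} [Fintype X]

lemma klDiv_expand (P Q : X → ℝ) (hP : ∀ a, 0 < P a) (hQ : ∀ a, 0 < Q a) :
    klDiv P Q = (∑ a, P a * Real.log (P a)) - ∑ a, P a * Real.log (Q a) := by
  rw [klDiv, ← Finset.sum_sub_distrib]
  refine Finset.sum_congr rfl fun a _ => ?_
  rw [Real.log_div (hP a).ne' (hQ a).ne']; ring

lemma klDiv_le_chisq (P Q : X → ℝ) (hP : ∀ a, 0 ≤ P a) (hQ : ∀ a, 0 < Q a)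
    (hPs : ∑ a, P a = 1) (hQs : ∑ a, Q a = 1) :
    klDiv P Q ≤ ∑ a, (P a - Q a) ^ 2 / Q a := by
  have h : ∀ a, P a * Real.log (P a / Q a) ≤ (P a - Q a) ^ 2 / Q a + (P a - Q a) := by
    intro a
    rcases eq_or_lt_of_le (hP a) with h0 | h0
    · have h2 : (0 - Q a) ^ 2 / Q a + (0 - Q a) = 0 := by
        rw [zero_sub, neg_sq, sq, mul_div_assoc, div_self (hQ a).ne']; ring
      rw [← h0, h2, zero_mul]
    · have hlog : Real.log (P a / Q a) ≤ P a / Q a - 1 :=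
        Real.log_le_sub_one_of_pos (div_pos h0 (hQ a))
      have h2 : P a * (P a / Q a - 1) = (P a - Q a) ^ 2 / Q a + (P a - Q a) := by
        have hQ' : Q a ≠ 0 := (hQ a).ne'
        field_simp
        ring
      nlinarith [mul_le_mul_of_nonneg_left hlog (le_of_lt h0)]
  calc klDiv P Q ≤ ∑ a, ((P a - Q a) ^ 2 / Q a + (P a - Q a)) :=
        Finset.sum_le_sum fun a _ => h a
    _ = ∑ a, (P a - Q a) ^ 2 / Q a + ((∑ a, P a) - ∑ a, Q a) := by
        rw [Finset.sum_add_distrib, Finset.sum_sub_distrib]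
    _ = ∑ a, (P a - Q a) ^ 2 / Q a := by rw [hPs, hQs]; ring

lemma Gexp {K : ℕ} (C : Finset (Fin K)) (P : Fin K → X → ℝ)
    (hPpos : ∀ i a, 0 < P i a) (w : Fin K → ℝ)
    (hw : ∀ i ∈ C, 0 < w i) (hC : C.Nonempty) :
    GstatF C P w = (∑ i ∈ C, w i * ∑ a, P i a * Real.log (P i a))
      - ∑ a, (∑ j ∈ C, w j * P j a)
          * Real.log ((∑ j ∈ C, w j * P j a) / (∑ j ∈ C, w j)) := by
  obtain ⟨i0, hi0⟩ := hC
  have hS : 0 < ∑ j ∈ C, w j := Finset.sum_pos (fun i hi => hw i hi) ⟨i0, hi0⟩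
  have hF : ∀ a, 0 < ∑ j ∈ C, w j * P j a :=
    fun a => Finset.sum_pos (fun i hi => mul_pos (hw i hi) (hPpos i a)) ⟨i0, hi0⟩
  have hQ : ∀ a, 0 < (∑ j ∈ C, w j * P j a) / (∑ j ∈ C, w j) :=
    fun a => div_pos (hF a) hS
  rw [GstatF, if_neg (by push_neg; exact ⟨i0, hi0, (hw i0 hi0).ne'⟩)]
  have h1 : ∀ i ∈ C,
      w i * klDiv (P i) (fun a => (∑ j ∈ C, w j * P j a) / (∑ j ∈ C, w j))
      = w i * (∑ a, P i a * Real.log (P i a))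
        - ∑ a, (w i * P i a)
            * Real.log ((∑ j ∈ C, w j * P j a) / (∑ j ∈ C, w j)) := by
    intro i hi
    rw [klDiv_expand _ _ (hPpos i) hQ, mul_sub]
    congr 1
    rw [Finset.mul_sum]
    exact Finset.sum_congr rfl fun a _ => by ring
  rw [Finset.sum_congr rfl h1, Finset.sum_sub_distrib]
  congr 1
  rw [Finset.sum_comm]
  exact Finset.sum_congr rfl fun a _ => by rw [← Finset.sum_mul]

lemma cluster_id {K : ℕ} (C : Finset (Fin K)) (P : Fin K → X → ℝ)
    (hPpos : ∀ i a, 0 < P i a) (x y : Fin K → ℝ)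
    (hx : ∀ i ∈ C, 0 < x i) (hy : ∀ i ∈ C, 0 < y i) (hC : C.Nonempty) :
    GstatF C P x - GstatF C P y
      + ∑ i ∈ C, (y i - x i)
          * klDiv (P i) (fun a => (∑ j ∈ C, x j * P j a) / (∑ j ∈ C, x j))
    = (∑ j ∈ C, y j) *
        klDiv (fun a => (∑ j ∈ C, y j * P j a) / (∑ j ∈ C, y j))
              (fun a => (∑ j ∈ C, x j * P j a) / (∑ j ∈ C, x j)) := by
  obtain ⟨i0, hi0⟩ := hC
  have hSx : 0 < ∑ j ∈ C, x j := Finset.sum_pos (fun i hi => hx i hi) ⟨i0, hi0⟩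
  have hSy : 0 < ∑ j ∈ C, y j := Finset.sum_pos (fun i hi => hy i hi) ⟨i0, hi0⟩
  have hFx : ∀ a, 0 < ∑ j ∈ C, x j * P j a :=
    fun a => Finset.sum_pos (fun i hi => mul_pos (hx i hi) (hPpos i a)) ⟨i0, hi0⟩
  have hFy : ∀ a, 0 < ∑ j ∈ C, y j * P j a :=
    fun a => Finset.sum_pos (fun i hi => mul_pos (hy i hi) (hPpos i a)) ⟨i0, hi0⟩
  have hQx : ∀ a, 0 < (∑ j ∈ C, x j * P j a) / (∑ j ∈ C, x j) :=
    fun a => div_pos (hFx a) hSx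
  have hQy : ∀ a, 0 < (∑ j ∈ C, y j * P j a) / (∑ j ∈ C, y j) :=
    fun a => div_pos (hFy a) hSy
  have hcross : ∑ i ∈ C, (y i - x i)
          * klDiv (P i) (fun a => (∑ j ∈ C, x j * P j a) / (∑ j ∈ C, x j))
      = ((∑ i ∈ C, y i * ∑ a, P i a * Real.log (P i a))
          - ∑ i ∈ C, x i * ∑ a, P i a * Real.log (P i a))
        - ((∑ a, (∑ j ∈ C, y j * P j a)
              * Real.log ((∑ j ∈ C, x j * P j a) / (∑ j ∈ C, x j)))
           - ∑ a, (∑ j ∈ C, x j * P j a)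
              * Real.log ((∑ j ∈ C, x j * P j a) / (∑ j ∈ C, x j))) := by
    have e1 : ∀ i ∈ C, (y i - x i)
        * klDiv (P i) (fun a => (∑ j ∈ C, x j * P j a) / (∑ j ∈ C, x j))
        = (y i * ∑ a, P i a * Real.log (P i a)
            - x i * ∑ a, P i a * Real.log (P i a))
          - ∑ a, ((y i - x i) * P i a)
              * Real.log ((∑ j ∈ C, x j * P j a) / (∑ j ∈ C, x j)) := by
      intro i hi
      rw [klDiv_expand _ _ (hPpos i) hQx, mul_sub]
      congr 1
      · ring
      · rw [Finset.mul_sum]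
        exact Finset.sum_congr rfl fun a _ => by ring
    rw [Finset.sum_congr rfl e1, Finset.sum_sub_distrib, Finset.sum_sub_distrib,
      Finset.sum_comm]
    congr 1
    rw [← Finset.sum_sub_distrib]
    refine Finset.sum_congr rfl fun a _ => ?_
    rw [← Finset.sum_mul, ← sub_mul, ← Finset.sum_sub_distrib]
    congr 1
    exact Finset.sum_congr rfl fun i _ => by ring
  have hR : (∑ j ∈ C, y j) *
        klDiv (fun a => (∑ j ∈ C, y j * P j a) / (∑ j ∈ C, y j))
              (fun a => (∑ j ∈ C, x j * P j a) / (∑ j ∈ C, x j))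
      = (∑ a, (∑ j ∈ C, y j * P j a)
            * Real.log ((∑ j ∈ C, y j * P j a) / (∑ j ∈ C, y j)))
        - ∑ a, (∑ j ∈ C, y j * P j a)
            * Real.log ((∑ j ∈ C, x j * P j a) / (∑ j ∈ C, x j)) := by
    rw [klDiv_expand _ _ hQy hQx, mul_sub, Finset.mul_sum, Finset.mul_sum]
    congr 1
    · refine Finset.sum_congr rfl fun a _ => ?_
      rw [← mul_assoc, mul_div_cancel₀ _ hSy.ne']
    · refine Finset.sum_congr rfl fun a _ => ?_
      rw [← mul_assoc, mul_div_cancel₀ _ hSy.ne']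
  rw [Gexp C P hPpos x hx ⟨i0, hi0⟩, Gexp C P hPpos y hy ⟨i0, hi0⟩, hcross, hR]
  ring

end Aux

set_option maxHeartbeats 2000000 in
theorem stmt11 {X : Type*} [Fintype X] [Nonempty X]
    (K : ℕ) (hK : 2 ≤ K)
    (P : Fin K → X → ℝ) (hP : ∀ i, IsDist (P i))
    (pmin : ℝ) (hpminpos : 0 < pmin)
    (hpmlb : ∀ i a, pmin ≤ P i a) (hpmeq : ∃ i a, P i a = pmin)
    (σ' : Finset (Finset (Fin K))) (hσ' : IsHyp σ')
    (γ : ℝ) (hγ : 0 < γ) (hγK : γ < 1 / K)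
    -- `grad` is the gradient map `∇` of `g_P^{σ'}` on `Σ_K^γ`:
    (grad : (Fin K → ℝ) → Fin K → ℝ)
    (hgrad : ∀ w : Fin K → ℝ, (∀ i, γ ≤ w i) → ∑ i, w i = 1 →
      ∀ C ∈ σ', ∀ i ∈ C,
        grad w i
          = klDiv (P i) (fun a => (∑ j ∈ C, w j * P j a) / (∑ j ∈ C, w j)))
    (hgrad0 : ∀ w : Fin K → ℝ, (∀ i, γ ≤ w i) → ∑ i, w i = 1 →
      ∀ i : Fin K, (∀ C ∈ σ', i ∉ C) → grad w i = 0)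
    (D : ℝ)
    (hD : D = ((σ'.sup fun C => C.card : ℕ) : ℝ) * (Fintype.card X)
        * (1 - pmin) / (4 * pmin)) :
    ∀ x z : Fin K → ℝ,
      (∀ i, γ ≤ x i) → ∑ i, x i = 1 →
      (∀ i, γ ≤ z i) → ∑ i, z i = 1 →
      ∀ α : ℝ, 0 < α → α ≤ 1 →
      ∀ y : Fin K → ℝ, (∀ i, y i = x i + α * (z i - x i)) →
        gscore P σ' x - gscore P σ' y + ∑ i, (y i - x i) * grad x i
          ≤ (D / γ) * α ^ 2 := by
  intro x z hxγ hxs hzγ hzs α hα0 hα1 y hy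
  have hPpos : ∀ i a, 0 < P i a := fun i a => lt_of_lt_of_le hpminpos (hpmlb i a)
  have hyγ : ∀ i, γ ≤ y i := by
    intro i; rw [hy i]; nlinarith [hxγ i, hzγ i]
  have hxpos : ∀ i, 0 < x i := fun i => lt_of_lt_of_le hγ (hxγ i)
  have hypos : ∀ i, 0 < y i := fun i => lt_of_lt_of_le hγ (hyγ i)
  have hzpos : ∀ i, 0 < z i := fun i => lt_of_lt_of_le hγ (hzγ i)
  have hpm1 : pmin ≤ 1 := by
    obtain ⟨i, a, hia⟩ := hpmeq
    have h1 := Finset.single_le_sum (f := P i) (fun b _ => (hP i).1 b) (Finset.mem_univ a)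
    rw [(hP i).2] at h1
    linarith [hia ▸ h1]
  have hcX : 1 ≤ (Fintype.card X : ℝ) := by
    exact_mod_cast Fintype.card_pos (α := X)
  have hXpm : (Fintype.card X : ℝ) * pmin ≤ 1 := by
    have i : Fin K := ⟨0, by omega⟩
    have h1 := Finset.card_nsmul_le_sum Finset.univ (P i) pmin (fun a _ => hpmlb i a)
    rw [(hP i).2, Finset.card_univ, nsmul_eq_mul] at h1
    exact h1
  have hPub : ∀ i a, P i a ≤ 1 - ((Fintype.card X : ℝ) - 1) * pmin := by
    intro i a
    have h1 := Finset.card_nsmul_le_sum (Finset.univ.erase a) (P i) pmin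
      (fun b _ => hpmlb i b)
    rw [Finset.card_erase_of_mem (Finset.mem_univ a), Finset.card_univ, nsmul_eq_mul] at h1
    have h2 : ∑ b ∈ Finset.univ.erase a, P i b + P i a = 1 := by
      rw [Finset.sum_erase_add _ _ (Finset.mem_univ a)]; exact (hP i).2
    have h3 : ((Fintype.card X - 1 : ℕ) : ℝ) = (Fintype.card X : ℝ) - 1 := by
      have : 1 ≤ Fintype.card X := Fintype.card_pos
      push_cast [Nat.cast_sub this]; ring
    rw [h3] at h1
    linarith
  -- per-cluster bound
  have key : ∀ C ∈ σ',
      GstatF C P x - GstatF C P y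
        + ∑ i ∈ C, (y i - x i)
            * klDiv (P i) (fun a => (∑ j ∈ C, x j * P j a) / (∑ j ∈ C, x j))
      ≤ α ^ 2 * (∑ i ∈ C, z i)
          * ((Fintype.card X : ℝ) * (1 - pmin) / pmin) / (2 * γ) := by
    intro C hC
    have hCcard : 2 ≤ C.card := hσ'.1 C hC
    have hCne : C.Nonempty := Finset.card_pos.mp (by omega)
    rw [cluster_id C P hPpos x y (fun i _ => hxpos i) (fun i _ => hypos i) hCne]
    have hSx : 0 < ∑ j ∈ C, x j := Finset.sum_pos (fun i _ => hxpos i) hCne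
    have hSy : 0 < ∑ j ∈ C, y j := Finset.sum_pos (fun i _ => hypos i) hCne
    have hSz : 0 < ∑ j ∈ C, z j := Finset.sum_pos (fun i _ => hzpos i) hCne
    have hSzle : ∑ j ∈ C, z j ≤ 1 := by
      rw [← hzs]
      exact Finset.sum_le_sum_of_subset_of_nonneg (Finset.subset_univ C)
        (fun i _ _ => (hzpos i).le)
    have hSy2γ : 2 * γ ≤ ∑ j ∈ C, y j := by
      have h1 : (C.card : ℝ) * γ ≤ ∑ j ∈ C, y j := by
        calc (C.card : ℝ) * γ = ∑ _j ∈ C, γ := by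
              rw [Finset.sum_const, nsmul_eq_mul]
          _ ≤ ∑ j ∈ C, y j := Finset.sum_le_sum fun i _ => hyγ i
      have h2 : (2 : ℝ) ≤ (C.card : ℝ) := by exact_mod_cast hCcard
      nlinarith
    -- mixture distribution facts
    have hF : ∀ (w : Fin K → ℝ), (∀ i, 0 < w i) → ∀ a, 0 < ∑ j ∈ C, w j * P j a :=
      fun w hw a => Finset.sum_pos (fun i _ => mul_pos (hw i) (hPpos i a)) hCne
    have hQsum : ∀ (w : Fin K → ℝ), (∀ i, 0 < w i) →
        ∑ a, (∑ j ∈ C, w j * P j a) / (∑ j ∈ C, w j) = 1 := by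
      intro w hw
      have hSw : 0 < ∑ j ∈ C, w j := Finset.sum_pos (fun i _ => hw i) hCne
      rw [← Finset.sum_div, Finset.sum_comm]
      rw [Finset.sum_congr rfl (fun j _ => by rw [← Finset.mul_sum, (hP j).2, mul_one] :
        ∀ j ∈ C, ∑ a, w j * P j a = w j)]
      exact div_self hSw.ne'
    have hQlb : ∀ (w : Fin K → ℝ), (∀ i, 0 < w i) → ∀ a,
        pmin ≤ (∑ j ∈ C, w j * P j a) / (∑ j ∈ C, w j) := by
      intro w hw a
      have hSw : 0 < ∑ j ∈ C, w j := Finset.sum_pos (fun i _ => hw i) hCne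
      rw [le_div_iff₀ hSw]
      calc pmin * ∑ j ∈ C, w j = ∑ j ∈ C, w j * pmin := by
            rw [Finset.mul_sum]; exact Finset.sum_congr rfl fun j _ => by ring
        _ ≤ ∑ j ∈ C, w j * P j a :=
            Finset.sum_le_sum fun j _ => mul_le_mul_of_nonneg_left (hpmlb j a) (hw j).le
    have hQub : ∀ (w : Fin K → ℝ), (∀ i, 0 < w i) → ∀ a,
        (∑ j ∈ C, w j * P j a) / (∑ j ∈ C, w j)
          ≤ 1 - ((Fintype.card X : ℝ) - 1) * pmin := by
      intro w hw a
      have hSw : 0 < ∑ j ∈ C, w j := Finset.sum_pos (fun i _ => hw i) hCne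
      rw [div_le_iff₀ hSw]
      calc ∑ j ∈ C, w j * P j a
          ≤ ∑ j ∈ C, w j * (1 - ((Fintype.card X : ℝ) - 1) * pmin) :=
            Finset.sum_le_sum fun j _ => mul_le_mul_of_nonneg_left (hPub j a) (hw j).le
        _ = (1 - ((Fintype.card X : ℝ) - 1) * pmin) * ∑ j ∈ C, w j := by
            rw [Finset.mul_sum]; exact Finset.sum_congr rfl fun j _ => by ring
    -- difference formula
    have hFy : ∀ a, ∑ j ∈ C, y j * P j a
        = (∑ j ∈ C, x j * P j a)
          + α * ((∑ j ∈ C, z j * P j a) - ∑ j ∈ C, x j * P j a) := by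
      intro a
      rw [Finset.sum_congr rfl (fun j _ => by rw [hy j]; ring :
        ∀ j ∈ C, y j * P j a = x j * P j a + α * (z j * P j a - x j * P j a))]
      rw [Finset.sum_add_distrib, ← Finset.mul_sum, Finset.sum_sub_distrib]
    have hSy' : ∑ j ∈ C, y j = (∑ j ∈ C, x j) + α * ((∑ j ∈ C, z j) - ∑ j ∈ C, x j) := by
      rw [Finset.sum_congr rfl (fun j _ => hy j), Finset.sum_add_distrib,
        ← Finset.mul_sum, Finset.sum_sub_distrib]
    have hdiff : ∀ a,
        (∑ j ∈ C, y j * P j a) / (∑ j ∈ C, y j)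
          - (∑ j ∈ C, x j * P j a) / (∑ j ∈ C, x j)
        = α * (∑ j ∈ C, z j) / (∑ j ∈ C, y j)
            * ((∑ j ∈ C, z j * P j a) / (∑ j ∈ C, z j)
               - (∑ j ∈ C, x j * P j a) / (∑ j ∈ C, x j)) := by
      intro a
      have hSy0 : (∑ j ∈ C, y j) ≠ 0 := hSy.ne'
      rw [hFy a]
      rw [hSy'] at hSy0 ⊢
      field_simp
      ring
    -- chi-square bound
    have hkl : klDiv (fun a => (∑ j ∈ C, y j * P j a) / (∑ j ∈ C, y j))
          (fun a => (∑ j ∈ C, x j * P j a) / (∑ j ∈ C, x j))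
        ≤ ∑ a, ((∑ j ∈ C, y j * P j a) / (∑ j ∈ C, y j)
              - (∑ j ∈ C, x j * P j a) / (∑ j ∈ C, x j)) ^ 2
            / ((∑ j ∈ C, x j * P j a) / (∑ j ∈ C, x j)) :=
      klDiv_le_chisq _ _ (fun a => (div_pos (hF y hypos a) hSy).le)
        (fun a => div_pos (hF x hxpos a) hSx) (hQsum y hypos) (hQsum x hxpos)
    have hterm2 : ∀ a,
        ((∑ j ∈ C, z j * P j a) / (∑ j ∈ C, z j)
          - (∑ j ∈ C, x j * P j a) / (∑ j ∈ C, x j)) ^ 2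
          / ((∑ j ∈ C, x j * P j a) / (∑ j ∈ C, x j))
        ≤ (1 - pmin) / pmin := by
      intro a
      have hu := hQlb z hzpos a
      have hu2 := hQub z hzpos a
      have hv := hQlb x hxpos a
      have hv2 := hQub x hxpos a
      have h3 : (0:ℝ) ≤ 1 - (Fintype.card X : ℝ) * pmin := by linarith
      have hcp : (0:ℝ) ≤ (Fintype.card X : ℝ) * pmin := by positivity
      have hsq : ((∑ j ∈ C, z j * P j a) / (∑ j ∈ C, z j)
            - (∑ j ∈ C, x j * P j a) / (∑ j ∈ C, x j)) ^ 2
          ≤ (1 - (Fintype.card X : ℝ) * pmin) ^ 2 :=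
        sq_le_sq' (by nlinarith) (by nlinarith)
      have hsq2 : (1 - (Fintype.card X : ℝ) * pmin) ^ 2 ≤ 1 - pmin := by
        nlinarith [mul_nonneg h3 hcp,
          mul_nonneg (by linarith : (0:ℝ) ≤ (Fintype.card X : ℝ) - 1) hpminpos.le]
      exact div_le_div₀ (by linarith) (by linarith) hpminpos (hQlb x hxpos a)
    have hsum1 : ∑ a, ((∑ j ∈ C, z j * P j a) / (∑ j ∈ C, z j)
          - (∑ j ∈ C, x j * P j a) / (∑ j ∈ C, x j)) ^ 2
          / ((∑ j ∈ C, x j * P j a) / (∑ j ∈ C, x j))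
        ≤ (Fintype.card X : ℝ) * ((1 - pmin) / pmin) := by
      calc _ ≤ ∑ _a : X, (1 - pmin) / pmin := Finset.sum_le_sum fun a _ => hterm2 a
        _ = (Fintype.card X : ℝ) * ((1 - pmin) / pmin) := by
            rw [Finset.sum_const, nsmul_eq_mul, Finset.card_univ]
    have hsum2 : ∑ a, ((∑ j ∈ C, y j * P j a) / (∑ j ∈ C, y j)
              - (∑ j ∈ C, x j * P j a) / (∑ j ∈ C, x j)) ^ 2
            / ((∑ j ∈ C, x j * P j a) / (∑ j ∈ C, x j))
        ≤ α ^ 2 * ((∑ j ∈ C, z j) ^ 2 / (∑ j ∈ C, y j) ^ 2)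
            * ((Fintype.card X : ℝ) * ((1 - pmin) / pmin)) := by
      have e : ∀ a, ((∑ j ∈ C, y j * P j a) / (∑ j ∈ C, y j)
              - (∑ j ∈ C, x j * P j a) / (∑ j ∈ C, x j)) ^ 2
            / ((∑ j ∈ C, x j * P j a) / (∑ j ∈ C, x j))
          = α ^ 2 * ((∑ j ∈ C, z j) ^ 2 / (∑ j ∈ C, y j) ^ 2)
            * (((∑ j ∈ C, z j * P j a) / (∑ j ∈ C, z j)
               - (∑ j ∈ C, x j * P j a) / (∑ j ∈ C, x j)) ^ 2
              / ((∑ j ∈ C, x j * P j a) / (∑ j ∈ C, x j))) := by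
        intro a; rw [hdiff a]; ring
      rw [Finset.sum_congr rfl fun a _ => e a, ← Finset.mul_sum]
      exact mul_le_mul_of_nonneg_left hsum1 (by positivity)
    -- combine
    have hKBnn : (0:ℝ) ≤ (Fintype.card X : ℝ) * ((1 - pmin) / pmin) :=
      mul_nonneg (Nat.cast_nonneg _) (div_nonneg (by linarith) hpminpos.le)
    have hstep : (∑ j ∈ C, y j) * klDiv
          (fun a => (∑ j ∈ C, y j * P j a) / (∑ j ∈ C, y j))
          (fun a => (∑ j ∈ C, x j * P j a) / (∑ j ∈ C, x j))
        ≤ (∑ j ∈ C, y j) * (α ^ 2 * ((∑ j ∈ C, z j) ^ 2 / (∑ j ∈ C, y j) ^ 2)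
            * ((Fintype.card X : ℝ) * ((1 - pmin) / pmin))) :=
      mul_le_mul_of_nonneg_left (le_trans hkl hsum2) hSy.le
    refine le_trans hstep ?_
    have e2 : (∑ j ∈ C, y j) * (α ^ 2 * ((∑ j ∈ C, z j) ^ 2 / (∑ j ∈ C, y j) ^ 2)
            * ((Fintype.card X : ℝ) * ((1 - pmin) / pmin)))
        = α ^ 2 * ((Fintype.card X : ℝ) * ((1 - pmin) / pmin))
            * ((∑ j ∈ C, z j) ^ 2 / (∑ j ∈ C, y j)) := by
      field_simp
    rw [e2]
    have h3 : (∑ j ∈ C, z j) ^ 2 / (∑ j ∈ C, y j) ≤ (∑ j ∈ C, z j) / (2 * γ) :=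
      div_le_div₀ hSz.le (by nlinarith) (by positivity) hSy2γ
    calc α ^ 2 * ((Fintype.card X : ℝ) * ((1 - pmin) / pmin))
            * ((∑ j ∈ C, z j) ^ 2 / (∑ j ∈ C, y j))
        ≤ α ^ 2 * ((Fintype.card X : ℝ) * ((1 - pmin) / pmin))
            * ((∑ j ∈ C, z j) / (2 * γ)) := by
          apply mul_le_mul_of_nonneg_left h3 (by positivity)
      _ = α ^ 2 * (∑ i ∈ C, z i) * ((Fintype.card X : ℝ) * (1 - pmin) / pmin) / (2 * γ) := by
          field_simp
  -- assemble over clusters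
  have hdisj : (↑σ' : Set (Finset (Fin K))).PairwiseDisjoint id := hσ'.2
  have hgs : ∑ i, (y i - x i) * grad x i
      = ∑ C ∈ σ', ∑ i ∈ C, (y i - x i)
          * klDiv (P i) (fun a => (∑ j ∈ C, x j * P j a) / (∑ j ∈ C, x j)) := by
    have h0 : ∑ i, (y i - x i) * grad x i
        = ∑ i ∈ σ'.biUnion id, (y i - x i) * grad x i := by
      symm
      apply Finset.sum_subset (Finset.subset_univ _)
      intro i _ hiB
      have hni : ∀ C ∈ σ', i ∉ C := fun C hC hiC =>
        hiB (Finset.mem_biUnion.mpr ⟨C, hC, hiC⟩)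
      rw [hgrad0 x hxγ hxs i hni, mul_zero]
    rw [h0, Finset.sum_biUnion hdisj]
    refine Finset.sum_congr rfl fun C hC => Finset.sum_congr rfl fun i hi => ?_
    rw [hgrad x hxγ hxs C hC i hi]
  have hLHS : gscore P σ' x - gscore P σ' y + ∑ i, (y i - x i) * grad x i
      = ∑ C ∈ σ', (GstatF C P x - GstatF C P y
          + ∑ i ∈ C, (y i - x i)
              * klDiv (P i) (fun a => (∑ j ∈ C, x j * P j a) / (∑ j ∈ C, x j))) := by
    rw [gscore, gscore, hgs, ← Finset.sum_sub_distrib, ← Finset.sum_add_distrib]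
  rw [hLHS]
  have hT1 : ∑ C ∈ σ', ∑ i ∈ C, z i ≤ 1 := by
    have hb := Finset.sum_biUnion (f := z) (t := id) (s := σ') hdisj
    simp only [id_eq] at hb
    rw [← hb, ← hzs]
    exact Finset.sum_le_sum_of_subset_of_nonneg (Finset.subset_univ _)
      (fun i _ _ => (hzpos i).le)
  have hT0 : 0 ≤ ∑ C ∈ σ', ∑ i ∈ C, z i :=
    Finset.sum_nonneg fun C _ => Finset.sum_nonneg fun i _ => (hzpos i).le
  have hKBnn : (0:ℝ) ≤ (Fintype.card X : ℝ) * (1 - pmin) / pmin :=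
    div_nonneg (mul_nonneg (Nat.cast_nonneg _) (by linarith)) hpminpos.le
  calc ∑ C ∈ σ', (GstatF C P x - GstatF C P y
          + ∑ i ∈ C, (y i - x i)
              * klDiv (P i) (fun a => (∑ j ∈ C, x j * P j a) / (∑ j ∈ C, x j)))
      ≤ ∑ C ∈ σ', α ^ 2 * (∑ i ∈ C, z i)
          * ((Fintype.card X : ℝ) * (1 - pmin) / pmin) / (2 * γ) :=
        Finset.sum_le_sum key
    _ = α ^ 2 * ((Fintype.card X : ℝ) * (1 - pmin) / pmin) / (2 * γ)
          * ∑ C ∈ σ', ∑ i ∈ C, z i := by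
        rw [Finset.mul_sum]
        exact Finset.sum_congr rfl fun C _ => by ring
    _ ≤ (D / γ) * α ^ 2 := by
        rcases σ'.eq_empty_or_nonempty with h | h
        · subst h
          simp only [Finset.sum_empty, mul_zero]
          have : D = 0 := by
            rw [hD]; simp
          rw [this]
          simp
        · obtain ⟨C0, hC0⟩ := h
          have hM : (2:ℝ) ≤ ((σ'.sup fun C => C.card : ℕ) : ℝ) := by
            have h2 : 2 ≤ σ'.sup fun C => C.card :=
              le_trans (hσ'.1 C0 hC0) (Finset.le_sup hC0)
            exact_mod_cast h2
          have hDγ : D / γ = (((σ'.sup fun C => C.card : ℕ) : ℝ) / 2)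
              * ((Fintype.card X : ℝ) * (1 - pmin) / pmin / (2 * γ)) := by
            rw [hD]
            field_simp
            ring
          rw [hDγ]
          have hKg : 0 ≤ (Fintype.card X : ℝ) * (1 - pmin) / pmin / (2 * γ) :=
            div_nonneg hKBnn (by positivity)
          calc α ^ 2 * ((Fintype.card X : ℝ) * (1 - pmin) / pmin) / (2 * γ)
                * ∑ C ∈ σ', ∑ i ∈ C, z i
              ≤ α ^ 2 * ((Fintype.card X : ℝ) * (1 - pmin) / pmin) / (2 * γ) * 1 :=
                mul_le_mul_of_nonneg_left hT1
                  (div_nonneg (mul_nonneg (sq_nonneg α) hKBnn) (by positivity))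
            _ = (Fintype.card X : ℝ) * (1 - pmin) / pmin / (2 * γ) * α ^ 2 := by ring
            _ ≤ ((σ'.sup fun C => C.card : ℕ) : ℝ) / 2
                  * ((Fintype.card X : ℝ) * (1 - pmin) / pmin / (2 * γ)) * α ^ 2 :=
                mul_le_mul_of_nonneg_right (le_mul_of_one_le_left hKg (by linarith))
                  (sq_nonneg α)
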